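/- arXiv:1508.03228 — 5 statements merged into one kernel-verified Lean document; each statement's English description precedes it below -/
import Mathlib

section
/- For Lebesgue-almost every x ∈ ℝ^M, the linear span of the vectors g_1(x), g_2(x), …, g_R(x) equals the stoichiometric space span_ℝ{γ(·,r) : r = 1,…,R}; equivalently, the set of points x ∈ ℝ^M at which span_ℝ{g_r(x) : r = 1,…,R} is a proper subspace of the stoichiometric space has Lebesgue measure zero. (The theorem that a chemical reaction with all reaction rate coefficients as control inputs is controllable almost everywhere.) -/
open MeasureTheory

/-- The vector field of the `r`-th reaction step: `g_r(x) = x^{α(·,r)} • γ(·,r)`. -/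
noncomputable def reactionVF (M R : ℕ) (α : Fin M → Fin R → ℕ)
    (γ : Matrix (Fin M) (Fin R) ℝ) (r : Fin R) (x : Fin M → ℝ) : Fin M → ℝ :=
  (∏ m, x m ^ α m r) • fun m => γ m r

/-- for Lebesgue-almost every `x ∈ ℝ^M`, the span of
`g_1(x), …, g_R(x)` equals the stoichiometric space `span{γ(·,r) : r}`. -/
theorem ae_span_reactionVF_eq_stoichiometricSpace (M R : ℕ)
    (α : Fin M → Fin R → ℕ) (γ : Matrix (Fin M) (Fin R) ℝ) :
    ∀ᵐ x : Fin M → ℝ ∂volume,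
      Submodule.span ℝ (Set.range fun r => reactionVF M R α γ r x) =
        Submodule.span ℝ (Set.range fun r => (fun m => γ m r : Fin M → ℝ)) := by
  have h : ∀ᵐ x : Fin M → ℝ ∂volume, ∀ m : Fin M, x m ≠ 0 := by
    rw [MeasureTheory.ae_all_iff]
    intro m
    exact MeasureTheory.Measure.ae_eval_ne _ m 0
  filter_upwards [h] with x hx
  have hc : ∀ r : Fin R, (∏ m, x m ^ α m r) ≠ 0 := fun r =>
    Finset.prod_ne_zero_iff.mpr fun m _ => pow_ne_zero _ (hx m)
  apply le_antisymm
  · rw [Submodule.span_le]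
    rintro _ ⟨r, rfl⟩
    exact Submodule.smul_mem _ _ (Submodule.subset_span ⟨r, rfl⟩)
  · rw [Submodule.span_le]
    rintro _ ⟨r, rfl⟩
    have : (fun m => γ m r : Fin M → ℝ) =
        (∏ m, x m ^ α m r)⁻¹ • reactionVF M R α γ r x := by
      rw [reactionVF, smul_smul, inv_mul_cancel₀ (hc r), one_smul]
    show (fun m => γ m r : Fin M → ℝ) ∈ _
    rw [this]
    exact Submodule.smul_mem _ _ (Submodule.subset_span ⟨r, rfl⟩)
end

section
/- For any indices i, j ∈ {1,…,R} and every x ∈ ℝ^M, the Lie bracket of the reaction-step vector fields satisfies [g_i, g_j](x) = κ_{j,i}(x) · x^{α(·,i)} • γ(·,j) − κ_{i,j}(x) · x^{α(·,j)} • γ(·,i). (Lemma 1: the Lie bracket of the vector fields corresponding to two reaction steps is, at each point, a linear combination of the two reaction step vectors.) -/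
/-- The Lie bracket of two vector fields on `ℝ^M`:
`[φ,ψ](x) = Dψ(x)(φ(x)) − Dφ(x)(ψ(x))`. -/
noncomputable def lieBracket {M : ℕ} (φ ψ : (Fin M → ℝ) → (Fin M → ℝ))
    (x : Fin M → ℝ) : Fin M → ℝ :=
  fderiv ℝ ψ x (φ x) - fderiv ℝ φ x (ψ x)

/-- `d_m^i(x) = 0` if `α(m,i) = 0`, and `d_m^i(x) = x^{α(·,i) − e_m}` otherwise. -/
noncomputable def dmi (M R : ℕ) (α : Fin M → Fin R → ℕ) (i : Fin R) (m : Fin M)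
    (x : Fin M → ℝ) : ℝ :=
  if α m i = 0 then 0 else ∏ l, x l ^ (α l i - if l = m then 1 else 0)

/-- `κ_{i,j}(x) = ∑_m α(m,i) γ(m,j) d_m^i(x)`. -/
noncomputable def kappa (M R : ℕ) (α : Fin M → Fin R → ℕ)
    (γ : Matrix (Fin M) (Fin R) ℝ) (i j : Fin R) (x : Fin M → ℝ) : ℝ :=
  ∑ m, (α m i : ℝ) * γ m j * dmi M R α i m x

/-- The Fréchet derivative of the monomial `x ↦ ∏ m, x m ^ n m`. -/
lemma hasFDerivAt_monomial (M : ℕ) (n : Fin M → ℕ) (x : Fin M → ℝ) :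
    HasFDerivAt (fun y : Fin M → ℝ => ∏ m, y m ^ n m)
      (∑ m, (∏ l ∈ Finset.univ.erase m, x l ^ n l) •
        ((n m : ℝ) * x m ^ (n m - 1)) • (ContinuousLinearMap.proj m :
          (Fin M → ℝ) →L[ℝ] ℝ)) x :=
  HasFDerivAt.finset_prod (fun m _ =>
    (hasDerivAt_pow (n m) (x m)).comp_hasFDerivAt x
      ((ContinuousLinearMap.proj m : (Fin M → ℝ) →L[ℝ] ℝ).hasFDerivAt))

lemma coeff_eq (M R : ℕ) (α : Fin M → Fin R → ℕ) (r : Fin R) (m : Fin M)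
    (x : Fin M → ℝ) :
    (∏ l ∈ Finset.univ.erase m, x l ^ α l r) * ((α m r : ℝ) * x m ^ (α m r - 1)) =
      (α m r : ℝ) * dmi M R α r m x := by
  unfold dmi
  by_cases h : α m r = 0
  · simp [h]
  · rw [if_neg h]
    rw [← Finset.mul_prod_erase _ (fun l => x l ^ (α l r - if l = m then 1 else 0))
      (Finset.mem_univ m)]
    rw [if_pos rfl]
    rw [Finset.prod_congr rfl (fun l hl =>
      show x l ^ (α l r - if l = m then 1 else 0) = x l ^ α l r by
        rw [if_neg (Finset.ne_of_mem_erase hl), Nat.sub_zero])]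
    ring

/-- Applying the monomial derivative map to a vector `c` yields a kappa-like sum. -/
lemma monomial_deriv_apply (M R : ℕ) (α : Fin M → Fin R → ℕ)
    (γ : Matrix (Fin M) (Fin R) ℝ) (r s : Fin R) (x : Fin M → ℝ) :
    (∑ m, (∏ l ∈ Finset.univ.erase m, x l ^ α l r) •
        ((α m r : ℝ) * x m ^ (α m r - 1)) • (ContinuousLinearMap.proj m :
          (Fin M → ℝ) →L[ℝ] ℝ)) (fun m => γ m s) = kappa M R α γ r s x := by
  rw [ContinuousLinearMap.sum_apply]
  unfold kappa
  refine Finset.sum_congr rfl fun m _ => ?_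
  simp only [ContinuousLinearMap.smul_apply, ContinuousLinearMap.proj_apply,
    smul_eq_mul]
  rw [← mul_assoc, coeff_eq M R α r m x]
  ring

lemma hasFDerivAt_reactionVF (M R : ℕ) (α : Fin M → Fin R → ℕ)
    (γ : Matrix (Fin M) (Fin R) ℝ) (r : Fin R) (x : Fin M → ℝ) :
    HasFDerivAt (reactionVF M R α γ r)
      ((∑ m, (∏ l ∈ Finset.univ.erase m, x l ^ α l r) •
        ((α m r : ℝ) * x m ^ (α m r - 1)) • (ContinuousLinearMap.proj m :
          (Fin M → ℝ) →L[ℝ] ℝ)).smulRight (fun m => γ m r)) x :=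
  (hasFDerivAt_monomial M (fun m => α m r) x).smul_const (fun m => γ m r)

/-- Lemma 1: the Lie bracket of the vector fields of two reaction steps is,
at each point, `κ_{j,i}(x) x^{α(·,i)} • γ(·,j) − κ_{i,j}(x) x^{α(·,j)} • γ(·,i)`. -/
theorem lieBracket_reactionVF (M R : ℕ) (α : Fin M → Fin R → ℕ)
    (γ : Matrix (Fin M) (Fin R) ℝ) (i j : Fin R) (x : Fin M → ℝ) :
    lieBracket (reactionVF M R α γ i) (reactionVF M R α γ j) x =
      (kappa M R α γ j i x * ∏ m, x m ^ α m i) • (fun m => γ m j : Fin M → ℝ) -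
        (kappa M R α γ i j x * ∏ m, x m ^ α m j) • (fun m => γ m i : Fin M → ℝ) := by
  unfold lieBracket
  rw [(hasFDerivAt_reactionVF M R α γ i x).fderiv,
    (hasFDerivAt_reactionVF M R α γ j x).fderiv]
  simp only [reactionVF, ContinuousLinearMap.smulRight_apply, map_smul, smul_eq_mul]
  rw [monomial_deriv_apply M R α γ j i x, monomial_deriv_apply M R α γ i j x]
  rw [smul_smul, smul_smul, mul_comm (kappa M R α γ j i x),
    mul_comm (kappa M R α γ i j x)]
end

section
/- For any indices i, j ∈ {1,…,R}: κ_{i,j}(x) = 0 for all x ∈ ℝ^M if and only if α(m,i) · γ(m,j) = 0 for every m ∈ {1,…,M}. (Lemma 2.) -/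
/-- Lemma 2: `κ_{i,j}` vanishes identically iff
`α(m,i) · γ(m,j) = 0` for every `m`. -/
theorem kappa_eq_zero_iff (M R : ℕ) (α : Fin M → Fin R → ℕ)
    (γ : Matrix (Fin M) (Fin R) ℝ) (i j : Fin R) :
    (∀ x : Fin M → ℝ, kappa M R α γ i j x = 0) ↔
      ∀ m, (α m i : ℝ) * γ m j = 0 := by
  constructor
  · intro h m
    by_cases hm : α m i = 0
    · simp [hm]
    · -- Evaluate at x = 1
      have h1 := h (fun _ => (1 : ℝ))
      have hS : ∑ l, (α l i : ℝ) * γ l j = 0 := by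
        rw [kappa] at h1
        rw [← h1]
        apply Finset.sum_congr rfl
        intro l _
        by_cases hl : α l i = 0 <;> simp [dmi, hl]
      -- Evaluate at x = (2 at m, 1 elsewhere)
      set x₂ : Fin M → ℝ := fun l => if l = m then (2 : ℝ) else 1 with hx₂
      have hd : ∀ l, α l i ≠ 0 →
          dmi M R α i l x₂ = 2 ^ (α m i - if m = l then 1 else 0) := by
        intro l hl
        rw [dmi, if_neg hl]
        rw [Finset.prod_eq_single m]
        · simp [hx₂]
        · intro k _ hk
          simp [hx₂, hk]
        · simp
      have h2 : ∑ l, (α l i : ℝ) * γ l j *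
          2 ^ (α m i - if m = l then 1 else 0) = 0 := by
        have h2' := h x₂
        rw [kappa] at h2'
        rw [← h2']
        apply Finset.sum_congr rfl
        intro l _
        by_cases hl : α l i = 0
        · simp [hl]
        · rw [hd l hl]
      have key : (α m i : ℝ) * γ m j *
          ((2 : ℝ) ^ (α m i - 1) - 2 ^ (α m i)) = 0 := by
        have hsum : ∑ l, (α l i : ℝ) * γ l j *
            ((2 : ℝ) ^ (α m i - if m = l then 1 else 0) - 2 ^ (α m i)) = 0 := by
          have : ∑ l, (α l i : ℝ) * γ l j *
              ((2 : ℝ) ^ (α m i - if m = l then 1 else 0) - 2 ^ (α m i))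
              = (∑ l, (α l i : ℝ) * γ l j *
                2 ^ (α m i - if m = l then 1 else 0))
              - (∑ l, (α l i : ℝ) * γ l j) * 2 ^ (α m i) := by
            rw [Finset.sum_mul, ← Finset.sum_sub_distrib]
            apply Finset.sum_congr rfl
            intro l _
            ring
          rw [this, h2, hS]
          ring
        rw [Finset.sum_eq_single m] at hsum
        · simpa using hsum
        · intro l _ hl
          simp [Ne.symm hl]
        · simp
      rcases mul_eq_zero.mp key with h' | h'
      · exact h'
      · exfalso
        have : (2 : ℝ) ^ (α m i - 1) < 2 ^ (α m i) := by
          apply pow_lt_pow_right₀ (by norm_num)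
          omega
        linarith
  · intro h x
    rw [kappa]
    apply Finset.sum_eq_zero
    intro m _
    rw [h m, zero_mul]
end

section
/- Let γ ∈ ℝ^{M×R} with columns γ(·,1),…,γ(·,R), and let ρ_1, …, ρ_R : ℝ^M → ℝ be (evaluations of) multivariate polynomials. If there exists a point x* ∈ ℝ^M such that the span of {ρ_1(x*) • γ(·,1), …, ρ_R(x*) • γ(·,R)} has dimension equal to rank γ, then for Lebesgue-almost every x ∈ ℝ^M the span of {ρ_1(x) • γ(·,1), …, ρ_R(x) • γ(·,R)} has dimension equal to rank γ. (Theorem 6: if a chemical reaction is controllable at one point, it is controllable almost everywhere.) -/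
/-!
The zero set of a nonzero real polynomial is Lebesgue-null: by induction on the number of
variables, for almost every value `y` of the last coordinates the leading coefficient in the
first variable does not vanish at `y`, so the slice through `y` is a finite set of roots, and
Fubini concludes. Hence every `ρ r` that is nonzero at `x*` is nonzero almost everywhere, and at
such `x` the span of the vectors `ρ r x • γ(·,r)` contains the span at `x*` and is contained in
the column space of `γ`; both have dimension `rank γ`.
-/

open MeasureTheory

theorem MeasureTheory.Measure.ae_prod_iff_ae_ae_swap {α β : Type*} [MeasurableSpace α]
    [MeasurableSpace β] {μ : Measure α} {ν : Measure β} [SFinite μ] [SFinite ν]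
    {p : α × β → Prop} (hp : MeasurableSet {z | p z}) :
    (∀ᵐ z ∂μ.prod ν, p z) ↔ ∀ᵐ y ∂ν, ∀ᵐ x ∂μ, p (x, y) := by
  rw [← Measure.prod_swap, ae_map_iff measurable_swap.aemeasurable hp]
  exact Measure.ae_prod_iff_ae_ae (hp.preimage measurable_swap)

theorem MeasureTheory.ae_of_ae_finCons {α : Type*} [MeasureSpace α]
    [SigmaFinite (volume : Measure α)] {n : ℕ} {P : (Fin (n + 1) → α) → Prop}
    (h : ∀ᵐ z : α × (Fin n → α), P (Fin.cons z.1 z.2)) : ∀ᵐ x : Fin (n + 1) → α, P x := by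
  filter_upwards [(volume_preserving_piFinSuccAbove (fun _ => α) 0).quasiMeasurePreserving.ae h]
    with x hx
  simpa [Fin.cons_self_tail] using hx

namespace MvPolynomial

theorem finite_setOf_eval_cons_eq_zero {R : Type*} [CommRing R] [IsDomain R] {n : ℕ}
    {p : MvPolynomial (Fin (n + 1)) R} {y : Fin n → R}
    (hy : eval y (finSuccEquiv R n p).leadingCoeff ≠ 0) :
    {a : R | eval (Fin.cons a y) p = 0}.Finite := by
  have hmap : (finSuccEquiv R n p).map (eval y) ≠ 0 := Polynomial.leadingCoeff_ne_zero.1 <| by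
    rwa [Polynomial.leadingCoeff_map_of_leadingCoeff_ne_zero _ hy]
  refine (Polynomial.finite_setOfPred_isRoot hmap).subset fun a ha => ?_
  rwa [Set.mem_ofPred_eq, eval_eq_eval_mv_eval'] at ha

theorem ae_eval_ne_zero {n : ℕ} {p : MvPolynomial (Fin n) ℝ} (hp : p ≠ 0) :
    ∀ᵐ x : Fin n → ℝ, eval x p ≠ 0 := by
  induction n with
  | zero =>
    obtain ⟨c, rfl⟩ := C_surjective (Fin 0) p
    exact ae_of_all _ fun x => by simpa using hp
  | succ n ih =>
    have hq : (finSuccEquiv ℝ n p).leadingCoeff ≠ 0 := by simpa using hp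
    have hslices : ∀ᵐ y : Fin n → ℝ, ∀ᵐ a : ℝ, eval (Fin.cons a y) p ≠ 0 := by
      filter_upwards [ih hq] with y hy
      exact (finite_setOf_eval_cons_eq_zero hy).countable.ae_notMem _
    have hmeas : MeasurableSet {z : ℝ × (Fin n → ℝ) | eval (Fin.cons z.1 z.2) p ≠ 0} :=
      ((continuous_eval p).comp (continuous_fst.finCons continuous_snd)).measurable
        (measurableSet_singleton 0).compl
    exact ae_of_ae_finCons ((Measure.ae_prod_iff_ae_ae_swap hmeas).2 hslices)

end MvPolynomial

theorem Submodule.span_range_smul_le_span_range_smul {K V ι : Type*} [DivisionRing K]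
    [AddCommGroup V] [Module K V] (v : ι → V) {c d : ι → K} (h : ∀ i, c i ≠ 0 → d i ≠ 0) :
    span K (Set.range fun i => c i • v i) ≤ span K (Set.range fun i => d i • v i) := by
  refine span_le.2 <| Set.range_subset_iff.2 fun i => ?_
  by_cases hc : c i = 0
  · simp [hc]
  · have hcd : c i • v i = (c i * (d i)⁻¹) • d i • v i := by
      rw [smul_smul, inv_mul_cancel_right₀ (h i hc)]
    rw [SetLike.mem_coe, hcd]
    exact smul_mem _ _ (subset_span ⟨i, rfl⟩)

theorem Submodule.span_range_smul_le_span_range {K V ι : Type*} [Semiring K]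
    [AddCommMonoid V] [Module K V] (v : ι → V) (c : ι → K) :
    span K (Set.range fun i => c i • v i) ≤ span K (Set.range v) :=
  span_le.2 <| Set.range_subset_iff.2 fun i => smul_mem _ _ (subset_span ⟨i, rfl⟩)

/-- Theorem 6: if at some point `x*` the span of the vectors
`ρ_r(x*) • γ(·,r)` has dimension `rank γ` (i.e. the reaction is controllable at `x*`),
then the same holds for Lebesgue-almost every `x ∈ ℝ^M`. -/
theorem controllable_at_point_implies_ae_controllable (M R : ℕ)
    (γ : Matrix (Fin M) (Fin R) ℝ) (ρ : Fin R → MvPolynomial (Fin M) ℝ)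
    (xstar : Fin M → ℝ)
    (h : Module.finrank ℝ (Submodule.span ℝ (Set.range fun r =>
        MvPolynomial.eval xstar (ρ r) • (fun m => γ m r : Fin M → ℝ))) = γ.rank) :
    ∀ᵐ x : Fin M → ℝ ∂volume,
      Module.finrank ℝ (Submodule.span ℝ (Set.range fun r =>
        MvPolynomial.eval x (ρ r) • (fun m => γ m r : Fin M → ℝ))) = γ.rank := by
  have hsupport : ∀ᵐ x : Fin M → ℝ,
      ∀ r, MvPolynomial.eval xstar (ρ r) ≠ 0 → MvPolynomial.eval x (ρ r) ≠ 0 := by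
    refine ae_all_iff.2 fun r => ?_
    by_cases hr : MvPolynomial.eval xstar (ρ r) = 0
    · exact ae_of_all _ fun _ h => absurd hr h
    · filter_upwards [MvPolynomial.ae_eval_ne_zero (p := ρ r) (by rintro h; simp [h] at hr)]
        with x hx _ using hx
  filter_upwards [hsupport] with x hx
  refine le_antisymm ?_ ?_
  · rw [Matrix.rank_eq_finrank_span_cols]
    exact Submodule.finrank_mono (Submodule.span_range_smul_le_span_range γ.col _)
  · rw [← h]
    exact Submodule.finrank_mono (Submodule.span_range_smul_le_span_range_smul γ.col hx)
end

section
/- Let I ⊆ {1,…,R} be a set of indices such that span_ℝ{γ(·,i) : i ∈ I} = span_ℝ{γ(·,r) : r = 1,…,R}. Then for every x ∈ ℝ^M with all coordinates nonzero, span_ℝ{g_i(x) : i ∈ I} = span_ℝ{γ(·,r) : r = 1,…,R}; in particular this holds for Lebesgue-almost every x ∈ ℝ^M. (Theorem 7: a reaction is controllable almost everywhere using as control inputs the rate coefficients of rank γ reaction steps whose reaction step vectors are linearly independent.) -/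
open MeasureTheory

/-- Theorem 7: if the columns `γ(·,i)`, `i ∈ I`, span the whole
stoichiometric space, then at every point with all coordinates nonzero the vector fields
`g_i(x)`, `i ∈ I`, span the stoichiometric space; in particular this holds for
Lebesgue-almost every `x`. -/
theorem span_reactionVF_of_spanning_columns (M R : ℕ)
    (α : Fin M → Fin R → ℕ) (γ : Matrix (Fin M) (Fin R) ℝ)
    (I : Set (Fin R))
    (hI : Submodule.span ℝ ((fun r => (fun m => γ m r : Fin M → ℝ)) '' I) =
        Submodule.span ℝ (Set.range fun r => (fun m => γ m r : Fin M → ℝ))) :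
    (∀ x : Fin M → ℝ, (∀ m, x m ≠ 0) →
      Submodule.span ℝ ((fun r => reactionVF M R α γ r x) '' I) =
        Submodule.span ℝ (Set.range fun r => (fun m => γ m r : Fin M → ℝ))) ∧
    ∀ᵐ x : Fin M → ℝ ∂volume,
      Submodule.span ℝ ((fun r => reactionVF M R α γ r x) '' I) =
        Submodule.span ℝ (Set.range fun r => (fun m => γ m r : Fin M → ℝ)) := by
  have key : ∀ x : Fin M → ℝ, (∀ m, x m ≠ 0) →
      Submodule.span ℝ ((fun r => reactionVF M R α γ r x) '' I) =
        Submodule.span ℝ (Set.range fun r => (fun m => γ m r : Fin M → ℝ)) := by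
    intro x hx
    rw [← hI]
    have hc : ∀ r : Fin R, (∏ m, x m ^ α m r) ≠ 0 := fun r =>
      Finset.prod_ne_zero_iff.2 fun m _ => pow_ne_zero _ (hx m)
    apply le_antisymm
    · rw [Submodule.span_le]
      rintro _ ⟨r, hr, rfl⟩
      exact Submodule.smul_mem _ _
        (Submodule.subset_span ⟨r, hr, rfl⟩)
    · rw [Submodule.span_le]
      rintro _ ⟨r, hr, rfl⟩
      have : (fun m => γ m r : Fin M → ℝ) =
          (∏ m, x m ^ α m r)⁻¹ • reactionVF M R α γ r x := by
        rw [reactionVF, smul_smul, inv_mul_cancel₀ (hc r), one_smul]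
      show (fun m => γ m r : Fin M → ℝ) ∈ _
      rw [this]
      exact Submodule.smul_mem _ _
        (Submodule.subset_span ⟨r, hr, rfl⟩)
  refine ⟨key, ?_⟩
  have hae : ∀ᵐ x : Fin M → ℝ ∂volume, ∀ m, x m ≠ 0 := by
    rw [ae_all_iff]
    intro m
    exact Measure.ae_eval_ne (fun _ : Fin M => (volume : Measure ℝ)) m 0
  filter_upwards [hae] with x hx using key x hx
end
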